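/- Let 𝔽 be a field, σ a field automorphism of 𝔽, G a finite group, P ≤ G a subgroup, and N a finite-dimensional 𝔽P-module such that 𝔉_P^G(N) is a semisimple 𝔽G-module. Let S be a simple 𝔽G-submodule of 𝔉_P^G(N). Then there is an isomorphism φ : ℋ_N(S)^σ → ℋ_{N^σ}(S^σ) of ℋ_G(P, N^σ)-modules, where ℋ_N(S)^σ is regarded as an ℋ_G(P, N^σ)-module via the algebra isomorphism ℋ_G(P,N)^σ ≅ ℋ_G(P,N^σ), and S^σ is regarded as a simple 𝔽G-submodule of 𝔉_P^G(N^σ) via the identification 𝔉_P^G(N)^σ ≅ 𝔉_P^G(N^σ). -/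

import Mathlib

/-! The `σ`-semilinear isomorphism `u : N → N^σ` induces, pointwise, a bijection
`𝔉_P^G(N) → 𝔉_P^G(N^σ)` that commutes with the `G`-action, hence is semilinear over the
coefficientwise extension of `σ` to `𝔽G`. Every object in the statement is transported along it:
`S^σ` is the image of `S`, `Ψ` conjugates a homomorphism `f` by it, and the Hecke operator `B'`
corresponding to `B` is the conjugate of `B`. All three properties are then formal. -/

section Coinduced

variable {𝔽 : Type*} [Field 𝔽] {G : Type*} [Group G] (P : Subgroup G)
variable {N : Type*} [AddCommGroup N] [Module 𝔽 N]

/-- Concrete model of the coinduced module `𝔉_P^G(N) = Hom_{𝔽P}(𝔽G, N)`: an `𝔽P`-linear map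
`𝔽G → N` is uniquely determined by its values on the basis `G`, i.e. by a function `f : G → N`
satisfying `f (p * g) = p • f g` for `p ∈ P`. -/
def coinducedModule (ν : Representation 𝔽 P N) : Submodule 𝔽 (G → N) where
  carrier := {f | ∀ (p : P) (g : G), f (↑p * g) = ν p (f g)}
  add_mem' := by
    intro f g hf hg p x
    simp only [Pi.add_apply, hf p x, hg p x, map_add]
  zero_mem' := by intro p x; simp
  smul_mem' := by
    intro c f hf p x
    simp only [Pi.smul_apply, hf p x, map_smul]

/-- The `𝔽G`-module structure on the coinduced module, `(a • f) x = f (x a)`, as a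
representation of `G`. -/
def coinducedRep (ν : Representation 𝔽 P N) :
    Representation 𝔽 G (coinducedModule P ν) where
  toFun g :=
    { toFun := fun f => ⟨fun x => (f : G → N) (x * g), fun p x => by
        simpa [mul_assoc] using f.2 p (x * g)⟩
      map_add' := fun f₁ f₂ => by ext x; rfl
      map_smul' := fun c f => by ext x; rfl }
  map_one' := by
    ext f x
    simp
  map_mul' := fun g₁ g₂ => by
    ext f x
    simp [mul_assoc]

instance (ν : Representation 𝔽 P N) : AddCommGroup (coinducedRep P ν).asModule :=
  inferInstanceAs (AddCommGroup (coinducedModule P ν))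

end Coinduced

attribute [local instance] RingHomInvPair.of_ringEquiv RingHomInvPair.of_ringEquiv_symm

lemma MonoidAlgebra.mapRingEquiv_algebraMap {k k' G : Type*} [CommSemiring k] [CommSemiring k']
    [Monoid G] (σ : k ≃+* k') (r : k) :
    mapRingEquiv G σ (algebraMap k (MonoidAlgebra k G) r) = algebraMap k' _ (σ r) := by
  simp [coe_algebraMap]

namespace LinearEquiv

variable {R R' M M' Q Q' : Type*} [Semiring R] [Semiring R'] [AddCommMonoid M] [AddCommMonoid M']
  [AddCommMonoid Q] [AddCommMonoid Q'] [Module R M] [Module R' M'] [Module R Q] [Module R' Q']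
  {τ : R ≃+* R'} (e₁ : M ≃ₛₗ[(τ : R →+* R')] M') (e₂ : Q ≃ₛₗ[(τ : R →+* R')] Q')

lemma arrowCongrAddEquiv_apply_apply (f : M →ₗ[R] Q) (x : M) :
    e₁.arrowCongrAddEquiv e₂ f (e₁ x) = e₂ (f x) := by
  simp [arrowCongrAddEquiv_apply]

lemma arrowCongrAddEquiv_comp (f : M →ₗ[R] Q) (B : Module.End R M) :
    e₁.arrowCongrAddEquiv e₂ (f ∘ₗ B) = e₁.arrowCongrAddEquiv e₂ f ∘ₗ e₁.conjRingEquiv B := by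
  ext
  simp

end LinearEquiv

namespace Representation

variable {k k' G V V' : Type*} [CommSemiring k] [CommSemiring k'] [Monoid G]
  [AddCommMonoid V] [Module k V] [AddCommMonoid V'] [Module k' V'] {σ : k ≃+* k'}
  {ρ : Representation k G V} {ρ' : Representation k' G V'}

noncomputable def asModuleSemilinearEquiv (e : V ≃ₛₗ[(σ : k →+* k')] V')
    (he : ∀ g x, e (ρ g x) = ρ' g (e x)) :
    ρ.asModule ≃ₛₗ[(MonoidAlgebra.mapRingEquiv G σ : MonoidAlgebra k G →+* MonoidAlgebra k' G)]
      ρ'.asModule where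
  toAddEquiv :=
    ρ.asModuleEquiv.toAddEquiv.trans (e.toAddEquiv.trans ρ'.asModuleEquiv.symm.toAddEquiv)
  map_smul' a x := by
    induction a using MonoidAlgebra.induction_linear with
    | zero => simp
    | add a b ha hb => simp_all [add_smul]
    | single g r =>
      apply ρ'.asModuleEquiv.injective
      rw [RingEquiv.coe_toRingHom, MonoidAlgebra.mapRingEquiv_single]
      change e (ρ.asModuleEquiv (MonoidAlgebra.single g r • x)) =
        ρ'.asModuleEquiv (MonoidAlgebra.single g (σ r) • _)
      rw [asModuleEquiv_map_smul, asModuleEquiv_map_smul, asAlgebraHom_single, asAlgebraHom_single,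
        LinearMap.smul_apply, LinearMap.smul_apply, map_smulₛₗ, he]
      rfl

end Representation

section CoinducedTwist

variable {𝔽 : Type*} [Field 𝔽] {σ : 𝔽 ≃+* 𝔽} {G : Type*} [Group G] {P : Subgroup G}
  {N N' : Type*} [AddCommGroup N] [Module 𝔽 N] [AddCommGroup N'] [Module 𝔽 N']
  {ν : Representation 𝔽 P N} {ν' : Representation 𝔽 P N'}

def coinducedModuleCongr (u : N ≃ₛₗ[(σ : 𝔽 →+* 𝔽)] N') (hu : ∀ p x, ν' p (u x) = u (ν p x)) :
    coinducedModule P ν ≃ₛₗ[(σ : 𝔽 →+* 𝔽)] coinducedModule P ν' where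
  toFun f := ⟨fun g => u ((f : G → N) g), fun p g => by simp [f.2 p g, hu]⟩
  invFun f := ⟨fun g => u.symm ((f : G → N') g), fun p g => by
    simp [f.2 p g, u.symm_apply_eq, ← hu]⟩
  left_inv f := by ext; simp
  right_inv f := by ext; simp
  map_add' f₁ f₂ := by ext; simp
  map_smul' c f := by ext; simp [map_smulₛₗ]

noncomputable def coinducedTwist (u : N ≃ₛₗ[(σ : 𝔽 →+* 𝔽)] N')
    (hu : ∀ p x, ν' p (u x) = u (ν p x)) :
    (coinducedRep P ν).asModule
      ≃ₛₗ[(MonoidAlgebra.mapRingEquiv G σ : MonoidAlgebra 𝔽 G →+* MonoidAlgebra 𝔽 G)]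
      (coinducedRep P ν').asModule :=
  Representation.asModuleSemilinearEquiv (coinducedModuleCongr u hu) fun _ _ => rfl

lemma eq_coinducedTwist_iff (u : N ≃ₛₗ[(σ : 𝔽 →+* 𝔽)] N') (hu : ∀ p x, ν' p (u x) = u (ν p x))
    (m : (coinducedRep P ν).asModule) (m' : (coinducedRep P ν').asModule) :
    m' = coinducedTwist u hu m ↔ ∀ g, ((coinducedRep P ν').asModuleEquiv m' : G → N') g =
      u (((coinducedRep P ν).asModuleEquiv m : G → N) g) := by
  rw [← (coinducedRep P ν').asModuleEquiv.injective.eq_iff, Subtype.ext_iff, funext_iff]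
  rfl

end CoinducedTwist

theorem hecke_module_sigma_twist_general
    {𝔽 : Type*} [Field 𝔽] (σ : 𝔽 ≃+* 𝔽)
    {G : Type*} [Group G] (P : Subgroup G)
    {N N' : Type*} [AddCommGroup N] [Module 𝔽 N]
    [AddCommGroup N'] [Module 𝔽 N']
    (ν : Representation 𝔽 P N) (ν' : Representation 𝔽 P N')
    (u : N ≃+ N') (hu : ∀ (α : 𝔽) (x : N), u (α • x) = σ α • u x)
    (hν' : ∀ (p : P) (x : N), ν' p (u x) = u (ν p x))
    (S : Submodule (MonoidAlgebra 𝔽 G) (coinducedRep P ν).asModule)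
    (S' : Submodule (MonoidAlgebra 𝔽 G) (coinducedRep P ν').asModule)
    (hS' : ∀ y : (coinducedRep P ν').asModule, y ∈ S' ↔ ∃ x ∈ S, ∀ g : G,
      (((coinducedRep P ν').asModuleEquiv y : coinducedModule P ν') : G → N') g
        = u ((((coinducedRep P ν).asModuleEquiv x : coinducedModule P ν) : G → N) g)) :
    ∃ Ψ : ((coinducedRep P ν).asModule →ₗ[MonoidAlgebra 𝔽 G] S) ≃+
          ((coinducedRep P ν').asModule →ₗ[MonoidAlgebra 𝔽 G] S'),
      (∀ (f : (coinducedRep P ν).asModule →ₗ[MonoidAlgebra 𝔽 G] S)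
          (m : (coinducedRep P ν).asModule) (m' : (coinducedRep P ν').asModule),
        (∀ g : G, (((coinducedRep P ν').asModuleEquiv m' : coinducedModule P ν') : G → N') g
            = u ((((coinducedRep P ν).asModuleEquiv m : coinducedModule P ν) : G → N) g)) →
        ∀ g : G,
          (((coinducedRep P ν').asModuleEquiv ((Ψ f m' : S') : (coinducedRep P ν').asModule) :
              coinducedModule P ν') : G → N') g
            = u ((((coinducedRep P ν).asModuleEquiv ((f m : S) : (coinducedRep P ν).asModule) :
              coinducedModule P ν) : G → N) g))
      ∧ (∀ (α : 𝔽) (f fα : (coinducedRep P ν).asModule →ₗ[MonoidAlgebra 𝔽 G] S),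
          (∀ m, ((fα m : S) : (coinducedRep P ν).asModule)
              = algebraMap 𝔽 (MonoidAlgebra 𝔽 G) α • ((f m : S) : (coinducedRep P ν).asModule)) →
          ∀ m', ((Ψ fα m' : S') : (coinducedRep P ν').asModule)
              = algebraMap 𝔽 (MonoidAlgebra 𝔽 G) (σ α) •
                  ((Ψ f m' : S') : (coinducedRep P ν').asModule))
      ∧ (∀ (B : Module.End (MonoidAlgebra 𝔽 G) (coinducedRep P ν).asModule)
          (B' : Module.End (MonoidAlgebra 𝔽 G) (coinducedRep P ν').asModule),
          (∀ (m : (coinducedRep P ν).asModule) (m' : (coinducedRep P ν').asModule),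
            (∀ g : G, (((coinducedRep P ν').asModuleEquiv m' : coinducedModule P ν') : G → N') g
                = u ((((coinducedRep P ν).asModuleEquiv m : coinducedModule P ν) : G → N) g)) →
            ∀ g : G,
              (((coinducedRep P ν').asModuleEquiv (B' m') : coinducedModule P ν') : G → N') g
                = u ((((coinducedRep P ν).asModuleEquiv (B m) : coinducedModule P ν) : G → N) g)) →
          ∀ f : (coinducedRep P ν).asModule →ₗ[MonoidAlgebra 𝔽 G] S,
            Ψ (f ∘ₗ B) = (Ψ f) ∘ₗ B') := by
  let U : N ≃ₛₗ[(σ : 𝔽 →+* 𝔽)] N' := { u with map_smul' := hu }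
  let E := coinducedTwist (P := P) U hν'
  have hE : ∀ m m', m' = E m ↔ ∀ g : G,
      (((coinducedRep P ν').asModuleEquiv m' : coinducedModule P ν') : G → N') g
        = u ((((coinducedRep P ν).asModuleEquiv m : coinducedModule P ν) : G → N) g) :=
    eq_coinducedTwist_iff U hν'
  obtain rfl : S' = S.map E.toLinearMap := by
    ext y
    rw [hS', Submodule.mem_map]
    simp only [← hE, LinearEquiv.coe_coe, eq_comm]
  refine ⟨E.arrowCongrAddEquiv (E.submoduleMap S), fun f m m' hm g => ?_,
    fun α f fα hfα m' => ?_, fun B B' hB f => ?_⟩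
  · obtain rfl := (hE m m').2 hm
    rw [LinearEquiv.arrowCongrAddEquiv_apply_apply]
    rfl
  · obtain ⟨m, rfl⟩ := E.surjective m'
    simp only [LinearEquiv.arrowCongrAddEquiv_apply_apply, LinearEquiv.submoduleMap_apply, hfα,
      map_smulₛₗ, RingEquiv.coe_toRingHom, MonoidAlgebra.mapRingEquiv_algebraMap]
  · have hB' : B' = E.conjRingEquiv B := by
      ext m'
      have hm' := (hE (E.symm m') m').1 (E.apply_symm_apply m').symm
      rw [(hE _ _).2 (hB _ _ hm')]
      rfl
    rw [hB', LinearEquiv.arrowCongrAddEquiv_comp]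

/-- Let `σ` be an automorphism of the field `𝔽`, `G` a finite group, `P ≤ G` and `N` a
finite-dimensional `𝔽P`-module (a representation `ν` of `P`) with `σ`-twist `N^σ` (the
representation `ν'` on `N'`, via the `σ`-semilinear isomorphism `u : N → N'`).  Suppose
`𝔉_P^G(N)` is a semisimple `𝔽G`-module and `S` is a simple `𝔽G`-submodule of `𝔉_P^G(N)`, with
image `S^σ = S'` in `𝔉_P^G(N^σ)` under the identification `𝔉_P^G(N)^σ ≅ 𝔉_P^G(N^σ)`.  Then
there is an isomorphism `φ : ℋ_N(S)^σ → ℋ_{N^σ}(S^σ)` of `ℋ_G(P,N^σ)`-modules: an additive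
bijection `Ψ : Hom_{𝔽G}(𝔉_P^G(N), S) → Hom_{𝔽G}(𝔉_P^G(N^σ), S^σ)` which is `σ`-semilinear
over `𝔽`, satisfies `Ψ f (φ m) = φ (f m)`, and intertwines the Hecke-algebra actions
`B • f = f ∘ B` via the isomorphism `ℋ_G(P,N) ≅ ℋ_G(P,N^σ)`, `B ↦ B'`. -/
theorem hecke_module_sigma_twist
    {𝔽 : Type*} [Field 𝔽] (σ : 𝔽 ≃+* 𝔽)
    {G : Type*} [Group G] [Finite G] (P : Subgroup G)
    {N N' : Type*} [AddCommGroup N] [Module 𝔽 N] [FiniteDimensional 𝔽 N]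
    [AddCommGroup N'] [Module 𝔽 N']
    (ν : Representation 𝔽 P N) (ν' : Representation 𝔽 P N')
    (u : N ≃+ N') (hu : ∀ (α : 𝔽) (x : N), u (α • x) = σ α • u x)
    (hν' : ∀ (p : P) (x : N), ν' p (u x) = u (ν p x))
    (hss : IsSemisimpleModule (MonoidAlgebra 𝔽 G) (coinducedRep P ν).asModule)
    (S : Submodule (MonoidAlgebra 𝔽 G) (coinducedRep P ν).asModule)
    (hS : IsSimpleModule (MonoidAlgebra 𝔽 G) S)
    (S' : Submodule (MonoidAlgebra 𝔽 G) (coinducedRep P ν').asModule)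
    (hS' : ∀ y : (coinducedRep P ν').asModule, y ∈ S' ↔ ∃ x ∈ S, ∀ g : G,
      (((coinducedRep P ν').asModuleEquiv y : coinducedModule P ν') : G → N') g
        = u ((((coinducedRep P ν).asModuleEquiv x : coinducedModule P ν) : G → N) g)) :
    ∃ Ψ : ((coinducedRep P ν).asModule →ₗ[MonoidAlgebra 𝔽 G] S) ≃+
          ((coinducedRep P ν').asModule →ₗ[MonoidAlgebra 𝔽 G] S'),
      (∀ (f : (coinducedRep P ν).asModule →ₗ[MonoidAlgebra 𝔽 G] S)
          (m : (coinducedRep P ν).asModule) (m' : (coinducedRep P ν').asModule),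
        (∀ g : G, (((coinducedRep P ν').asModuleEquiv m' : coinducedModule P ν') : G → N') g
            = u ((((coinducedRep P ν).asModuleEquiv m : coinducedModule P ν) : G → N) g)) →
        ∀ g : G,
          (((coinducedRep P ν').asModuleEquiv ((Ψ f m' : S') : (coinducedRep P ν').asModule) :
              coinducedModule P ν') : G → N') g
            = u ((((coinducedRep P ν).asModuleEquiv ((f m : S) : (coinducedRep P ν).asModule) :
              coinducedModule P ν) : G → N) g))
      ∧ (∀ (α : 𝔽) (f fα : (coinducedRep P ν).asModule →ₗ[MonoidAlgebra 𝔽 G] S),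
          (∀ m, ((fα m : S) : (coinducedRep P ν).asModule)
              = algebraMap 𝔽 (MonoidAlgebra 𝔽 G) α • ((f m : S) : (coinducedRep P ν).asModule)) →
          ∀ m', ((Ψ fα m' : S') : (coinducedRep P ν').asModule)
              = algebraMap 𝔽 (MonoidAlgebra 𝔽 G) (σ α) •
                  ((Ψ f m' : S') : (coinducedRep P ν').asModule))
      ∧ (∀ (B : Module.End (MonoidAlgebra 𝔽 G) (coinducedRep P ν).asModule)
          (B' : Module.End (MonoidAlgebra 𝔽 G) (coinducedRep P ν').asModule),
          (∀ (m : (coinducedRep P ν).asModule) (m' : (coinducedRep P ν').asModule),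
            (∀ g : G, (((coinducedRep P ν').asModuleEquiv m' : coinducedModule P ν') : G → N') g
                = u ((((coinducedRep P ν).asModuleEquiv m : coinducedModule P ν) : G → N) g)) →
            ∀ g : G,
              (((coinducedRep P ν').asModuleEquiv (B' m') : coinducedModule P ν') : G → N') g
                = u ((((coinducedRep P ν).asModuleEquiv (B m) : coinducedModule P ν) : G → N) g)) →
          ∀ f : (coinducedRep P ν).asModule →ₗ[MonoidAlgebra 𝔽 G] S,
            Ψ (f ∘ₗ B) = (Ψ f) ∘ₗ B') :=
  hecke_module_sigma_twist_general σ P ν ν' u hu hν' S S' hS'
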